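/- Image of a separator is a separator: Let S and S' be open connected subsets of ℝ^d and h : S → S' a smooth diffeomorphism. Let 𝒢 be a finite set of axis-separators of S with union G = ⋃_{H ∈ 𝒢} H, and let 𝒢' be a finite set of axis-separators of S' with union G' = ⋃_{H' ∈ 𝒢'} H'. If h(G) = G', then for every H ∈ 𝒢 one has h(H) ∈ 𝒢'. -/

import Mathlib

open Set MeasureTheory Topology

noncomputable section

abbrev Euc (d : ℕ) := EuclideanSpace ℝ (Fin d)

/-- Axis separator: points of `S` whose `i`-th coordinate equals `τ`. -/
def Gamma {d : ℕ} (S : Set (Euc d)) (i : Fin d) (τ : ℝ) : Set (Euc d) :=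
  {z | z ∈ S ∧ z i = τ}

/-- Positive half: points of `S` whose `i`-th coordinate is greater than `τ`. -/
def GammaPos {d : ℕ} (S : Set (Euc d)) (i : Fin d) (τ : ℝ) : Set (Euc d) :=
  {z | z ∈ S ∧ τ < z i}

/-- Negative half: points of `S` whose `i`-th coordinate is less than `τ`. -/
def GammaNeg {d : ℕ} (S : Set (Euc d)) (i : Fin d) (τ : ℝ) : Set (Euc d) :=
  {z | z ∈ S ∧ z i < τ}

/-- `Γ_S(i,τ)` is an axis-separator of `S`: it is nonempty and connected, and both of
its halves are nonempty and connected. (`IsConnected` includes nonemptiness.) -/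
def IsAxisSeparator {d : ℕ} (S : Set (Euc d)) (i : Fin d) (τ : ℝ) : Prop :=
  IsConnected (Gamma S i τ) ∧ IsConnected (GammaPos S i τ) ∧ IsConnected (GammaNeg S i τ)

/-- A smooth diffeomorphism from `S` onto `S'` with explicit inverse `hinv`. -/
structure IsSmoothDiffeoOn {d : ℕ} (h hinv : Euc d → Euc d) (S S' : Set (Euc d)) : Prop where
  mapsTo : Set.MapsTo h S S'
  mapsTo_inv : Set.MapsTo hinv S' S
  left_inv : ∀ z ∈ S, hinv (h z) = z
  right_inv : ∀ z' ∈ S', h (hinv z') = z'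
  smooth : ContDiffOn ℝ (⊤ : ℕ∞) h S
  smooth_inv : ContDiffOn ℝ (⊤ : ℕ∞) hinv S'

/-- A discrete coordination on `S`: for each axis `i`, a strictly increasing nonempty tuple
of thresholds, each giving an axis-separator of `S`. -/
structure DiscreteCoordination {d : ℕ} (S : Set (Euc d)) where
  n : Fin d → ℕ
  n_pos : ∀ i, 0 < n i
  A : (i : Fin d) → Fin (n i) → ℝ
  mono : ∀ i, StrictMono (A i)
  sep : ∀ i k, IsAxisSeparator S i (A i k)

/-- The grid of a discrete coordination: the union of all its axis-separators. -/
def DiscreteCoordination.grid {d : ℕ} {S : Set (Euc d)} (C : DiscreteCoordination S) :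
    Set (Euc d) :=
  ⋃ (i : Fin d), ⋃ (k : Fin (C.n i)), Gamma S i (C.A i k)

/-- The parallel-separator-set along axis `i`. -/
def DiscreteCoordination.axisSet {d : ℕ} {S : Set (Euc d)} (C : DiscreteCoordination S)
    (i : Fin d) : Set (Set (Euc d)) :=
  {H | ∃ k : Fin (C.n i), H = Gamma S i (C.A i k)}

/-- The axis-separator set of a discrete coordination. -/
def DiscreteCoordination.sepSet {d : ℕ} {S : Set (Euc d)} (C : DiscreteCoordination S) :
    Set (Set (Euc d)) :=
  {H | ∃ (i : Fin d) (k : Fin (C.n i)), H = Gamma S i (C.A i k)}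

/-- A backbone: a choice of one separator per axis such that they all meet in a single
point and each of them meets every separator of the grid lying on a different axis. -/
def DiscreteCoordination.HasBackbone {d : ℕ} {S : Set (Euc d)}
    (C : DiscreteCoordination S) : Prop :=
  ∃ kstar : (i : Fin d) → Fin (C.n i),
    (∃ z : Euc d, (⋂ (i : Fin d), Gamma S i (C.A i (kstar i))) = {z}) ∧
    ∀ (i j : Fin d), j ≠ i → ∀ k : Fin (C.n j),
      (Gamma S i (C.A i (kstar i)) ∩ Gamma S j (C.A j k)).Nonempty

/-- Quantization: `Q(x;T) = Σ_k 1[x ≥ T_k]`. -/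
def Q {K : ℕ} (x : ℝ) (T : Fin K → ℝ) : ℕ :=
  (Finset.univ.filter fun k : Fin K => T k ≤ x).card

/-- Quantization with order reversal: `Q⁻(x;T) = Σ_k 1[x ≤ T_k]`. -/
def Qneg {K : ℕ} (x : ℝ) (T : Fin K → ℝ) : ℕ :=
  (Finset.univ.filter fun k : Fin K => x ≤ T k).card

/-- Signed quantization: `Q^{+1} = Q` and `Q^{-1} = Q⁻`. -/
def Qsgn {K : ℕ} (s : ℤ) (x : ℝ) (T : Fin K → ℝ) : ℕ :=
  if s = 1 then Q x T else Qneg x T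

/-- `μ` (absolutely continuous w.r.t. Lebesgue) has a non-removable discontinuity at `z`
if every measurable density of `μ` w.r.t. Lebesgue measure is discontinuous at `z`. -/
def HasNonRemovableDiscont {d : ℕ} (μ : Measure (Euc d)) (z : Euc d) : Prop :=
  ∀ q : Euc d → ENNReal, Measurable q → μ = volume.withDensity q → ¬ ContinuousAt q z

/-- `T` has exactly two connected components, namely `Cp` and `Cm`. -/
def TwoComponents {d : ℕ} (T Cp Cm : Set (Euc d)) : Prop :=
  Cp ≠ Cm ∧
  (∃ x ∈ T, connectedComponentIn T x = Cp) ∧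
  (∃ x ∈ T, connectedComponentIn T x = Cm) ∧
  ∀ x ∈ T, connectedComponentIn T x = Cp ∨ connectedComponentIn T x = Cm

/-- The intersection set of a finite family of separators: points lying on at least two
distinct members. -/
def interSet {d M : ℕ} (H : Fin M → Set (Euc d)) : Set (Euc d) :=
  ⋃ (m : Fin M), ⋃ (m' : Fin M), ⋃ (_ : m ≠ m'), H m ∩ H m'

/-!
Pull the cover back to the connected set `H = Γ_S(i,τ)`: it is covered by the finitely many
relatively closed level sets `C = {z ∈ H | (h z)_j = c}`, one for each member of `𝒢'`, and
finitely many closed sets covering a space have interiors whose closures still cover it. On the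
closure of the interior of `C`, `Dh` maps the hyperplane `{v_i = 0}` into `{w_j = 0}`; as `Dh` is
invertible, this determines `j`, so these closures are pairwise disjoint, hence clopen in `H`,
and one of them is all of `H`. Thus `h(H) ⊆ H'` for some `H' ∈ 𝒢'`; symmetrically
`h⁻¹(H') ⊆ H''` for some `H'' ∈ 𝒢`, and `H ⊆ H''` forces `H = H''` because `S` is open.
-/

open Filter Function

section Topology

variable {X : Type*} [TopologicalSpace X]

theorem exists_inter_interior_nonempty_of_subset_sUnion {𝒞 : Set (Set X)} (h𝒞 : 𝒞.Finite)
    (hclosed : ∀ A ∈ 𝒞, IsClosed A) {O : Set X} (hO : IsOpen O) (hne : O.Nonempty)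
    (hcov : O ⊆ ⋃₀ 𝒞) : ∃ A ∈ 𝒞, (O ∩ interior A).Nonempty := by
  induction 𝒞, h𝒞 using Set.Finite.induction_on generalizing O with
  | empty => simpa using hcov hne.some_mem
  | @insert A 𝒞 _ _ ih =>
    by_cases hOA : O ⊆ A
    · exact ⟨A, mem_insert _ _, hne.mono fun x hx => ⟨hx, interior_maximal hOA hO hx⟩⟩
    · have hcov' : O \ A ⊆ ⋃₀ 𝒞 := fun x hx => by
        simpa [hx.2] using hcov hx.1
      obtain ⟨B, hB, hOB⟩ := ih (fun B hB => hclosed B (mem_insert_of_mem _ hB))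
        (hO.sdiff (hclosed A (mem_insert _ _))) (sdiff_nonempty.mpr hOA) hcov'
      exact ⟨B, mem_insert_of_mem _ hB, hOB.mono (inter_subset_inter_left _ sdiff_subset)⟩

theorem sUnion_closure_interior_eq_univ {𝒞 : Set (Set X)} (h𝒞 : 𝒞.Finite)
    (hclosed : ∀ A ∈ 𝒞, IsClosed A) (hcov : ⋃₀ 𝒞 = univ) :
    ⋃ A ∈ 𝒞, closure (interior A) = univ := by
  by_contra hne
  obtain ⟨A, hA, x, hx, hxA⟩ := exists_inter_interior_nonempty_of_subset_sUnion h𝒞 hclosed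
    (h𝒞.isClosed_biUnion fun _ _ => isClosed_closure).isOpen_compl
    (nonempty_compl.mpr hne) (hcov ▸ subset_univ _)
  exact hx (mem_biUnion hA (subset_closure hxA))

theorem univ_mem_of_closure_interior_inter_nonempty [PreconnectedSpace X] [Nonempty X]
    {𝒞 : Set (Set X)} (h𝒞 : 𝒞.Finite) (hclosed : ∀ A ∈ 𝒞, IsClosed A) (hcov : ⋃₀ 𝒞 = univ)
    (hsep : ∀ A ∈ 𝒞, ∀ B ∈ 𝒞, (closure (interior A) ∩ closure (interior B)).Nonempty → A = B) :
    univ ∈ 𝒞 := by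
  have hK := sUnion_closure_interior_eq_univ h𝒞 hclosed hcov
  obtain ⟨A, hA, hxA⟩ := mem_iUnion₂.mp (hK ▸ mem_univ (Classical.arbitrary X))
  have hcompl : (closure (interior A))ᶜ =
      ⋃ B ∈ {B ∈ 𝒞 | Disjoint (closure (interior B)) (closure (interior A))},
        closure (interior B) := by
    ext y
    simp only [mem_compl_iff, mem_iUnion₂, mem_sep_iff, exists_prop]
    constructor
    · intro hy
      obtain ⟨B, hB, hyB⟩ := mem_iUnion₂.mp (hK ▸ mem_univ y)
      refine ⟨B, ⟨hB, disjoint_iff_inter_eq_empty.mpr <| not_nonempty_iff_eq_empty.mp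
        fun hBA => hy (hsep B hB A hA hBA ▸ hyB)⟩, hyB⟩
    · rintro ⟨B, ⟨-, hBA⟩, hyB⟩
      exact hBA.notMem_of_mem_left hyB
  have hclopen : IsClopen (closure (interior A)) :=
    ⟨isClosed_closure, isClosed_compl_iff.mp (hcompl ▸
      (h𝒞.subset (sep_subset _ _)).isClosed_biUnion fun _ _ => isClosed_closure)⟩
  rcases isClopen_iff.mp hclopen with hempty | huniv
  · exact absurd hxA (hempty ▸ notMem_empty _)
  · exact (univ_subset_iff.mp (huniv ▸ (hclosed A hA).closure_interior_subset)) ▸ hA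

end Topology

theorem HasFDerivWithinAt.apply_eq_zero_of_eventuallyEq_const {𝕜 E F : Type*}
    [NontriviallyNormedField 𝕜] [NormedAddCommGroup E] [NormedSpace 𝕜 E]
    [NormedAddCommGroup F] [NormedSpace 𝕜 F] {f : E → F} {f' : E →L[𝕜] F} {s : Set E} {x v : E}
    (hf : HasFDerivWithinAt f f' s x) (hconst : f =ᶠ[𝓝[s] x] fun _ => f x)
    (hv : v ∈ tangentConeAt 𝕜 s x) : f' v = 0 :=
  hf.unique_on ((hasFDerivWithinAt_const (f x) x s).congr_of_eventuallyEq hconst rfl) hv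

theorem eq_of_surjective_of_mapsTo_coord_eq_zero {d : ℕ} {D : Euc d →ₗ[ℝ] Euc d}
    (hD : Surjective D) {i j k : Fin d} (hj : MapsTo D {v | v i = 0} {y | y j = 0})
    (hk : MapsTo D {v | v i = 0} {y | y k = 0}) : j = k := by
  have hcoord : ∀ l, MapsTo D {v | v i = 0} {y | y l = 0} →
      ∀ x, D x l = x i * D (EuclideanSpace.single i 1) l := fun l hl x => by
    have := hl (show x - x i • EuclideanSpace.single i 1 ∈ {v : Euc d | v i = 0} by simp)
    simpa [sub_eq_zero] using this
  by_contra hjk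
  obtain ⟨x, hx⟩ := hD (EuclideanSpace.single j 1)
  obtain ⟨y, hy⟩ := hD (EuclideanSpace.single k 1)
  have hxj := hcoord j hj x
  have hxk := hcoord k hk x
  have hyk := hcoord k hk y
  simp only [hx, hy, PiLp.single_apply, if_pos, if_neg (Ne.symm hjk)] at hxj hxk hyk
  have hxi : x i ≠ 0 := by rintro h0; simp [h0] at hxj
  have : D (EuclideanSpace.single i 1) k = 0 := by
    simpa [hxi] using hxk.symm
  simp [this] at hyk

section CoordinateHyperplane

variable {d : ℕ} {S : Set (Euc d)} {i : Fin d} {τ : ℝ} {f : Euc d → Euc d}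

theorem fderiv_apply_coord_eq_zero_of_mem_interior (hS : IsOpen S) {k : Fin d} {c : ℝ}
    {z : Gamma S i τ} (hfz : DifferentiableAt ℝ f z)
    (hz : z ∈ interior {y : Gamma S i τ | f y k = c}) {v : Euc d} (hv : v i = 0) :
    fderiv ℝ f z v k = 0 := by
  have hconst : (fun y => f y k) =ᶠ[𝓝[Gamma S i τ] (z : Euc d)] fun _ => f z k := by
    rw [← map_nhds_subtype_val, EventuallyEq, eventually_map]
    filter_upwards [mem_interior_iff_mem_nhds.mp hz] with y hy
      using hy.trans (interior_subset hz).symm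
  have htangent : v ∈ tangentConeAt ℝ (Gamma S i τ) z := by
    have hseg : segment ℝ (z : Euc d) (z + v) ⊆ {y | y i = τ} := by
      rintro _ ⟨a, b, -, -, hab, rfl⟩
      simp [hv, z.2.2, ← add_mul, hab]
    show v ∈ tangentConeAt ℝ (S ∩ {y | y i = τ}) (z : Euc d)
    rw [inter_comm, tangentConeAt_inter_nhds (hS.mem_nhds z.2.1)]
    simpa using mem_tangentConeAt_of_segment_subset hseg
  simpa using ((EuclideanSpace.proj k).hasFDerivAt.comp (z : Euc d)
    hfz.hasFDerivAt).hasFDerivWithinAt.apply_eq_zero_of_eventuallyEq_const hconst htangent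

theorem closure_interior_setOf_coord_eq_subset (hS : IsOpen S) (hf : ContDiffOn ℝ 1 f S)
    (k : Fin d) (c : ℝ) :
    closure (interior {y : Gamma S i τ | f y k = c}) ⊆
      {y | f y k = c ∧ MapsTo (fderiv ℝ f y) {v | v i = 0} {w | w k = 0}} := by
  have hf_cont : Continuous fun y : Gamma S i τ => f y :=
    (hf.continuousOn.mono fun y hy => hy.1).domRestrict
  have hDf_cont : Continuous fun y : Gamma S i τ => fderiv ℝ f y :=
    ((hf.continuousOn_fderiv_of_isOpen hS le_rfl).mono fun y hy => hy.1).domRestrict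
  refine closure_minimal (fun y hy =>
    ⟨interior_subset (s := {y : Gamma S i τ | f y k = c}) hy, fun v hv =>
      fderiv_apply_coord_eq_zero_of_mem_interior hS
        ((hf.differentiableOn one_ne_zero).differentiableAt (hS.mem_nhds y.2.1)) hy hv⟩) ?_
  simp only [MapsTo, mem_ofPred_eq, ofPred_and, ofPred_forall]
  exact (isClosed_eq ((PiLp.continuous_apply 2 _ k).comp hf_cont) continuous_const).inter
    (isClosed_iInter fun v => isClosed_iInter fun _ =>
      isClosed_eq ((PiLp.continuous_apply 2 _ k).comp
        ((ContinuousLinearMap.apply ℝ (Euc d) v).continuous.comp hDf_cont)) continuous_const)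

theorem exists_coord_eq_on_Gamma (hS : IsOpen S) (hH : IsConnected (Gamma S i τ))
    (hf : ContDiffOn ℝ 1 f S) (hsurj : ∀ z ∈ Gamma S i τ, Surjective (fderiv ℝ f z))
    {P : Set (Fin d × ℝ)} (hP : P.Finite) (hcov : ∀ z ∈ Gamma S i τ, ∃ p ∈ P, f z p.1 = p.2) :
    ∃ p ∈ P, ∀ z ∈ Gamma S i τ, f z p.1 = p.2 := by
  have : ConnectedSpace (Gamma S i τ) := isConnected_iff_connectedSpace.mp hH
  have : Nonempty (Gamma S i τ) := hH.nonempty.to_subtype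
  let C : Fin d × ℝ → Set (Gamma S i τ) := fun p => {y | f y p.1 = p.2}
  have hclosed : ∀ A ∈ C '' P, IsClosed A := by
    rintro _ ⟨p, -, rfl⟩
    exact isClosed_eq ((PiLp.continuous_apply 2 _ p.1).comp
      (hf.continuousOn.mono fun y hy => hy.1).domRestrict) continuous_const
  have hcovC : ⋃₀ (C '' P) = univ := eq_univ_of_forall fun y => by
    obtain ⟨p, hp, hyp⟩ := hcov y y.2
    exact ⟨C p, mem_image_of_mem C hp, hyp⟩
  have hsep : ∀ A ∈ C '' P, ∀ B ∈ C '' P,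
      (closure (interior A) ∩ closure (interior B)).Nonempty → A = B := by
    rintro _ ⟨p, -, rfl⟩ _ ⟨q, -, rfl⟩ ⟨y, hyp, hyq⟩
    obtain ⟨hp, hDp⟩ := closure_interior_setOf_coord_eq_subset hS hf p.1 p.2 hyp
    obtain ⟨hq, hDq⟩ := closure_interior_setOf_coord_eq_subset hS hf q.1 q.2 hyq
    have hpq : p.1 = q.1 := eq_of_surjective_of_mapsTo_coord_eq_zero
      (D := (fderiv ℝ f y : Euc d →ₗ[ℝ] Euc d)) (hsurj y y.2) hDp hDq
    rw [Prod.ext hpq (hp.symm.trans (hpq ▸ hq))]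
  obtain ⟨p, hp, hCp⟩ :=
    univ_mem_of_closure_interior_inter_nonempty (hP.image C) hclosed hcovC hsep
  exact ⟨p, hp, fun z hz => (hCp ▸ mem_univ (⟨z, hz⟩ : Gamma S i τ) :)⟩

end CoordinateHyperplane

theorem Gamma_eq_of_subset {d : ℕ} {S : Set (Euc d)} (hS : IsOpen S) {i i' : Fin d} {τ τ' : ℝ}
    (hne : (Gamma S i τ).Nonempty) (hsub : Gamma S i τ ⊆ Gamma S i' τ') :
    Gamma S i τ = Gamma S i' τ' := by
  obtain ⟨z, hz⟩ := hne
  obtain rfl : i = i' := by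
    by_contra hii
    let e : Euc d := EuclideanSpace.single i' 1
    have hnear : ∀ᶠ t in 𝓝[≠] (0 : ℝ), z + t • e ∈ S :=
      nhdsWithin_le_nhds <| (Continuous.tendsto (by fun_prop) 0).eventually
        (hS.mem_nhds (by simpa using hz.1))
    obtain ⟨t, htS, ht⟩ := (hnear.and self_mem_nhdsWithin).exists
    have hmem : z + t • e ∈ Gamma S i' τ' := hsub ⟨htS, by simpa [e, hii] using hz.2⟩
    have : z i' + t = τ' := by simpa [e] using hmem.2
    exact ht (show t = 0 by linarith [(hsub hz).2])
  obtain rfl : τ = τ' := hz.2.symm.trans (hsub hz).2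
  rfl

namespace IsSmoothDiffeoOn

variable {d : ℕ} {S S' : Set (Euc d)} {h hinv : Euc d → Euc d}

theorem symm (hdiff : IsSmoothDiffeoOn h hinv S S') : IsSmoothDiffeoOn hinv h S' S :=
  ⟨hdiff.mapsTo_inv, hdiff.mapsTo, hdiff.right_inv, hdiff.left_inv, hdiff.smooth_inv,
    hdiff.smooth⟩

theorem contDiffOn_one (hdiff : IsSmoothDiffeoOn h hinv S S') : ContDiffOn ℝ 1 h S :=
  hdiff.smooth.of_le (by exact_mod_cast le_top)

theorem surjective_fderiv (hdiff : IsSmoothDiffeoOn h hinv S S') (hS : IsOpen S)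
    (hS' : IsOpen S') {z : Euc d} (hz : z ∈ S) : Surjective (fderiv ℝ h z) := by
  have hhz : h z ∈ S' := hdiff.mapsTo hz
  have hinv_diff : HasFDerivAt hinv (fderiv ℝ hinv (h z)) (h z) :=
    (hdiff.symm.contDiffOn_one.differentiableOn one_ne_zero |>.differentiableAt
      (hS'.mem_nhds hhz)).hasFDerivAt
  have h_diff : HasFDerivAt h (fderiv ℝ h z) (hinv (h z)) := by
    rw [hdiff.left_inv z hz]
    exact (hdiff.contDiffOn_one.differentiableOn one_ne_zero |>.differentiableAt
      (hS.mem_nhds hz)).hasFDerivAt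
  have hid : (h ∘ hinv) =ᶠ[𝓝 (h z)] id :=
    eventually_of_mem (hS'.mem_nhds hhz) hdiff.right_inv
  have hcomp := ((h_diff.comp (h z) hinv_diff).congr_of_eventuallyEq hid.symm).unique
    (hasFDerivAt_id (h z))
  exact fun y => ⟨fderiv ℝ hinv (h z) y, by simpa using congrArg (· y) hcomp⟩

theorem exists_image_subset_of_image_subset_sUnion (hdiff : IsSmoothDiffeoOn h hinv S S')
    (hS : IsOpen S) (hS' : IsOpen S') {𝒢' : Set (Set (Euc d))} (h𝒢'fin : 𝒢'.Finite)
    (h𝒢' : ∀ H' ∈ 𝒢', ∃ (j : Fin d) (τ' : ℝ), H' = Gamma S' j τ') {i : Fin d} {τ : ℝ}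
    (hH : IsConnected (Gamma S i τ)) (hcov : h '' Gamma S i τ ⊆ ⋃₀ 𝒢') :
    ∃ H' ∈ 𝒢', h '' Gamma S i τ ⊆ H' := by
  have : Nonempty (Fin d) := ⟨i⟩
  choose! j τ' hH' using h𝒢'
  obtain ⟨_, ⟨H', hH'𝒢', rfl⟩, hcoord⟩ := exists_coord_eq_on_Gamma hS hH hdiff.contDiffOn_one
    (fun z hz => hdiff.surjective_fderiv hS hS' hz.1) (h𝒢'fin.image fun H' => (j H', τ' H'))
    fun z hz => by
      obtain ⟨H', hH'𝒢', hzH'⟩ := hcov (mem_image_of_mem h hz)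
      exact ⟨_, mem_image_of_mem _ hH'𝒢', (hH' H' hH'𝒢' ▸ hzH' : h z ∈ Gamma S' _ _).2⟩
  refine ⟨H', hH'𝒢', ?_⟩
  rintro _ ⟨z, hz, rfl⟩
  exact hH' H' hH'𝒢' ▸ ⟨hdiff.mapsTo hz.1, hcoord z hz⟩

end IsSmoothDiffeoOn

theorem image_of_separator_is_separator_general
    {d : ℕ} {S S' : Set (Euc d)} (hS : IsOpen S)
    (hS' : IsOpen S')
    {h hinv : Euc d → Euc d} (hdiff : IsSmoothDiffeoOn h hinv S S')
    (𝒢 𝒢' : Set (Set (Euc d))) (h𝒢fin : 𝒢.Finite) (h𝒢'fin : 𝒢'.Finite)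
    (h𝒢 : ∀ H ∈ 𝒢, ∃ (i : Fin d) (τ : ℝ), H = Gamma S i τ ∧ IsAxisSeparator S i τ)
    (h𝒢' : ∀ H' ∈ 𝒢', ∃ (j : Fin d) (τ : ℝ), H' = Gamma S' j τ ∧ IsAxisSeparator S' j τ)
    (hG : h '' (⋃₀ 𝒢) = ⋃₀ 𝒢') :
    ∀ H ∈ 𝒢, h '' H ∈ 𝒢' := by
  have hGamma : ∀ H ∈ 𝒢, ∃ (i : Fin d) (τ : ℝ), H = Gamma S i τ :=
    fun H hH => (h𝒢 H hH).imp fun _ => .imp fun _ => And.left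
  have hGamma' : ∀ H' ∈ 𝒢', ∃ (j : Fin d) (τ : ℝ), H' = Gamma S' j τ :=
    fun H' hH' => (h𝒢' H' hH').imp fun _ => .imp fun _ => And.left
  have hG_inv : hinv '' ⋃₀ 𝒢' = ⋃₀ 𝒢 := by
    refine hG ▸ LeftInvOn.image_image (LeftInvOn.mono (fun z hz => hdiff.left_inv z hz) ?_)
    rintro z ⟨H, hH, hz⟩
    obtain ⟨i, τ, rfl⟩ := hGamma H hH
    exact hz.1
  intro H hH
  obtain ⟨i, τ, rfl, hsep⟩ := h𝒢 H hH
  obtain ⟨H', hH', hHH'⟩ := hdiff.exists_image_subset_of_image_subset_sUnion hS hS' h𝒢'fin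
    hGamma' hsep.1 (hG ▸ image_mono (subset_sUnion_of_mem hH))
  obtain ⟨j, τ', rfl, hsep'⟩ := h𝒢' H' hH'
  obtain ⟨H'', hH'', hH'H''⟩ := hdiff.symm.exists_image_subset_of_image_subset_sUnion hS' hS
    h𝒢fin hGamma hsep'.1 (hG_inv ▸ image_mono (subset_sUnion_of_mem hH'))
  obtain ⟨i'', τ'', rfl, -⟩ := h𝒢 H'' hH''
  have hHH'' : Gamma S i τ = Gamma S i'' τ'' := Gamma_eq_of_subset hS hsep.1.nonempty
    fun z hz => hdiff.left_inv z hz.1 ▸ hH'H'' ⟨h z, hHH' ⟨z, hz, rfl⟩, rfl⟩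
  convert hH'
  exact hHH'.antisymm fun y hy => ⟨hinv y, hHH'' ▸ hH'H'' ⟨y, hy, rfl⟩, hdiff.right_inv y hy.1⟩

/-- **Image of a separator is a separator.** -/
theorem image_of_separator_is_separator
    {d : ℕ} {S S' : Set (Euc d)} (hS : IsOpen S) (hSc : IsConnected S)
    (hS' : IsOpen S') (hS'c : IsConnected S')
    {h hinv : Euc d → Euc d} (hdiff : IsSmoothDiffeoOn h hinv S S')
    (𝒢 𝒢' : Set (Set (Euc d))) (h𝒢fin : 𝒢.Finite) (h𝒢'fin : 𝒢'.Finite)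
    (h𝒢 : ∀ H ∈ 𝒢, ∃ (i : Fin d) (τ : ℝ), H = Gamma S i τ ∧ IsAxisSeparator S i τ)
    (h𝒢' : ∀ H' ∈ 𝒢', ∃ (j : Fin d) (τ : ℝ), H' = Gamma S' j τ ∧ IsAxisSeparator S' j τ)
    (hG : h '' (⋃₀ 𝒢) = ⋃₀ 𝒢') :
    ∀ H ∈ 𝒢, h '' H ∈ 𝒢' :=
  image_of_separator_is_separator_general hS hS' hdiff 𝒢 𝒢' h𝒢fin h𝒢'fin h𝒢 h𝒢' hG
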